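/- Let H : ℝ^D → Matrix (Fin N) (Fin N) ℂ be continuously differentiable with H(θ) Hermitian for every θ, let Ω ∈ ℝ^D and θ_0 ∈ ℝ^D, and let U(t; θ_0) be the solution of i ∂_t U(t;θ_0) = H(Ω t + θ_0) U(t;θ_0) with U(0;θ_0) = 1. Then for every j ∈ {1,…,D} and every t: −i U(t;θ_0)† ∂_{θ_{0j}} U(t;θ_0) = − ∫_0^t U(s;θ_0)† (∂_j H)(Ω s + θ_0) U(s;θ_0) ds. (The frequency-lattice displacement Δn(t) = −i U† ∇_{θ_0} U equals the time integral of the Heisenberg photon-current operator ṅ = −U†(∇_θ H)U.) -/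

import Mathlib

/-!
For two propagators `U`, `V` of Hamiltonians `A`, `B`, differentiating `V(t)ᴴ U(t)` gives
Duhamel's formula `U(t) - V(t) = V(t) (-i ∫₀ᵗ V(σ)ᴴ (A(σ) - B(σ)) U(σ) dσ)`. Compare the
propagators at the phases `θ₀` and `θ₀ + h eⱼ`: by Hadamard's lemma the difference of the
Hamiltonians is `h K(h, σ)` with `K` jointly continuous and `K(0, σ) = ∂ⱼH(Ω σ + θ₀)`, so the
difference quotient of `U(t)` is a parametric integral. Unitarity bounds `‖U(t) - V(t)‖` by
`∫ ‖A - B‖`, which makes the propagator jointly continuous in time and phase; hence that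
integral is continuous in `h`, and its value at `h = 0` is `∂_{θ₀ⱼ} U(t)`. Multiplying by
`-i U(t)ᴴ` and using `U(t)ᴴ U(t) = 1` gives the formula.
-/

open Matrix
open scoped Matrix.Norms.L2Operator

/-- Partial derivative in the `j`-th coordinate of a matrix-valued function on `ℝ^D`. -/
noncomputable def matPderiv {N D : ℕ} (j : Fin D)
    (H : (Fin D → ℝ) → Matrix (Fin N) (Fin N) ℂ) (θ : Fin D → ℝ) :
    Matrix (Fin N) (Fin N) ℂ :=
  deriv (fun s => H (Function.update θ j s)) (θ j)

open Filter Topology Complex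
open scoped Interval

theorem hasDerivAt_of_sub_eq_smul {𝕜 E : Type*} [NontriviallyNormedField 𝕜]
    [NormedAddCommGroup E] [NormedSpace 𝕜 E] {f g : 𝕜 → E} {a : 𝕜}
    (hfg : ∀ b, f b - f a = (b - a) • g b) (hg : ContinuousAt g a) :
    HasDerivAt f (g a) a := by
  rw [hasDerivAt_iff_tendsto_slope]
  refine (hg.tendsto.mono_left nhdsWithin_le_nhds).congr' ?_
  filter_upwards [self_mem_nhdsWithin] with b hb
  rw [slope_def_module, hfg, smul_smul, inv_mul_cancel₀ (sub_ne_zero.2 hb), one_smul]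

theorem sub_eq_smul_integral_unitInterval {E : Type*} [NormedAddCommGroup E] [NormedSpace ℝ E]
    [CompleteSpace E] {f f' : ℝ → E} (hf : ∀ x, HasDerivAt f (f' x) x) (hf' : Continuous f')
    (a b : ℝ) : f b - f a = (b - a) • ∫ τ in (0 : ℝ)..1, f' (a + τ * (b - a)) := by
  have hderiv : ∀ τ,
      HasDerivAt (fun τ => f (a + τ * (b - a))) ((b - a) • f' (a + τ * (b - a))) τ := fun τ => by
    have := (hf (a + τ * (b - a))).scomp τ (((hasDerivAt_id' τ).mul_const (b - a)).const_add a)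
    rwa [one_mul] at this
  rw [← intervalIntegral.integral_smul, intervalIntegral.integral_eq_sub_of_hasDerivAt
    (fun τ _ => hderiv τ) (Continuous.intervalIntegrable (by fun_prop) _ _)]
  simp

section Propagator

variable {n : Type*} [Fintype n] [DecidableEq n]

structure IsPropagator (A U : ℝ → Matrix n n ℂ) : Prop where
  map_zero : U 0 = 1
  hasDerivAt (t : ℝ) : HasDerivAt U (-I • (A t * U t)) t

namespace IsPropagator

variable {A B U V : ℝ → Matrix n n ℂ}

theorem continuous (hU : IsPropagator A U) : Continuous U :=
  continuous_iff_continuousAt.2 fun t => (hU.hasDerivAt t).continuousAt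

theorem hasDerivAt_conjTranspose_mul (hU : IsPropagator A U) (hV : IsPropagator B V)
    (hB : ∀ t, (B t)ᴴ = B t) (t : ℝ) :
    HasDerivAt (fun s => (V s)ᴴ * U s) (-I • ((V t)ᴴ * (A t - B t) * U t)) t := by
  have hV' : HasDerivAt (fun s => (V s)ᴴ) (I • ((V t)ᴴ * B t)) t :=
    (hV.hasDerivAt t).star.congr_deriv (by
      simp [star_eq_conjTranspose, conjTranspose_mul, hB])
  refine (hV'.mul (hU.hasDerivAt t)).congr_deriv ?_
  simp only [smul_mul_assoc, mul_smul_comm, mul_sub, sub_mul, mul_assoc]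
  module

theorem conjTranspose_mul_self (hU : IsPropagator A U) (hA : ∀ t, (A t)ᴴ = A t) (t : ℝ) :
    (U t)ᴴ * U t = 1 := by
  have hconst := is_const_of_deriv_eq_zero
    (fun s => (hU.hasDerivAt_conjTranspose_mul hU hA s).differentiableAt)
    (fun s => by simpa using (hU.hasDerivAt_conjTranspose_mul hU hA s).deriv) t 0
  simpa [hU.map_zero] using hconst

theorem mem_unitaryGroup (hU : IsPropagator A U) (hA : ∀ t, (A t)ᴴ = A t) (t : ℝ) :
    U t ∈ unitaryGroup n ℂ :=
  mem_unitaryGroup_iff'.2 (hU.conjTranspose_mul_self hA t)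

theorem conjTranspose_mul_eq_one_sub_integral (hU : IsPropagator A U) (hV : IsPropagator B V)
    (hB : ∀ t, (B t)ᴴ = B t) (hAc : Continuous A) (hBc : Continuous B) (t : ℝ) :
    (V t)ᴴ * U t = 1 - I • ∫ σ in (0 : ℝ)..t, (V σ)ᴴ * (A σ - B σ) * U σ := by
  have hcont : Continuous fun σ => -I • ((V σ)ᴴ * (A σ - B σ) * U σ) := by
    have := hU.continuous; have := hV.continuous; fun_prop
  have hFTC := intervalIntegral.integral_eq_sub_of_hasDerivAt
    (fun σ _ => hU.hasDerivAt_conjTranspose_mul hV hB σ) (hcont.intervalIntegrable 0 t)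
  rw [intervalIntegral.integral_smul, hU.map_zero, hV.map_zero, conjTranspose_one, mul_one,
    neg_smul, ← neg_sub, neg_inj] at hFTC
  rw [hFTC, sub_sub_cancel]

theorem sub_eq_mul_integral (hU : IsPropagator A U) (hV : IsPropagator B V)
    (hB : ∀ t, (B t)ᴴ = B t) (hAc : Continuous A) (hBc : Continuous B) (t : ℝ) :
    U t - V t = V t * (-I • ∫ σ in (0 : ℝ)..t, (V σ)ᴴ * (A σ - B σ) * U σ) := by
  have hVV : V t * (V t)ᴴ = 1 := mem_unitaryGroup_iff.1 (hV.mem_unitaryGroup hB t)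
  calc U t - V t = V t * ((V t)ᴴ * U t - 1) := by
        rw [mul_sub, ← mul_assoc, hVV, one_mul, mul_one]
    _ = _ := by
        rw [hU.conjTranspose_mul_eq_one_sub_integral hV hB hAc hBc, sub_sub_cancel_left,
          neg_smul]

theorem norm_sub_le (hU : IsPropagator A U) (hV : IsPropagator B V) (hA : ∀ t, (A t)ᴴ = A t)
    (hB : ∀ t, (B t)ᴴ = B t) (hAc : Continuous A) (hBc : Continuous B) (t : ℝ) :
    ‖U t - V t‖ ≤ ∫ σ in Ι 0 t, ‖A σ - B σ‖ := by
  rw [hU.sub_eq_mul_integral hV hB hAc hBc,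
    CStarRing.norm_mem_unitary_mul _ (hV.mem_unitaryGroup hB t), norm_smul, norm_neg, norm_I,
    one_mul]
  refine (intervalIntegral.norm_integral_le_integral_norm_uIoc).trans_eq ?_
  congr 1 with σ
  rw [CStarRing.norm_mul_mem_unitary _ (hU.mem_unitaryGroup hA σ)]
  exact CStarRing.norm_mem_unitary_mul _ (Unitary.star_mem (hV.mem_unitaryGroup hB σ))

end IsPropagator

open Function

theorem continuous_propagator_of_continuous_hamiltonian {X : Type*} [TopologicalSpace X]
    {A U : X → ℝ → Matrix n n ℂ} (hA : ∀ x t, (A x t)ᴴ = A x t)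
    (hAc : Continuous (uncurry A)) (hU : ∀ x, IsPropagator (A x) (U x)) :
    Continuous (uncurry U) := by
  rw [continuous_iff_continuousAt]
  rintro ⟨x₀, t₀⟩
  set T := |t₀| + 1
  set m : X → ℝ := fun x => ∫ σ in -T..T, ‖A x σ - A x₀ σ‖
  have hm : Continuous m := by
    apply intervalIntegral.continuous_parametric_intervalIntegral_of_continuous'
    exact (hAc.sub (hAc.comp (continuous_const.prodMk continuous_snd))).norm
  have hm₀ : m x₀ = 0 := by simp [m]
  have hAx : ∀ x, Continuous (A x) := fun x => hAc.comp (continuous_const.prodMk continuous_id)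
  have hbound : ∀ᶠ p in 𝓝 (x₀, t₀), ‖U p.1 p.2 - U x₀ p.2‖ ≤ m p.1 := by
    have hT : ∀ᶠ p : X × ℝ in 𝓝 (x₀, t₀), |p.2| < T :=
      continuous_snd.abs.continuousAt.eventually (gt_mem_nhds (lt_add_one _))
    filter_upwards [hT] with p hp
    refine ((hU p.1).norm_sub_le (hU x₀) (hA _) (hA _) (hAx _) (hAx _) p.2).trans ?_
    change _ ≤ ∫ σ in -T..T, _
    rw [abs_lt] at hp
    have hT₀ : 0 < T := by positivity
    rw [intervalIntegral.integral_of_le (by linarith)]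
    refine MeasureTheory.setIntegral_mono_set ?_ ?_ ?_
    · exact Continuous.integrableOn_Ioc (by fun_prop)
    · exact Eventually.of_forall fun σ => norm_nonneg _
    · exact Eventually.of_forall (Set.Ioc_subset_Ioc (le_min (by linarith) (by linarith))
        (max_le (by linarith) (by linarith)))
  have hsub : Tendsto (fun p : X × ℝ => U p.1 p.2 - U x₀ p.2) (𝓝 (x₀, t₀)) (𝓝 0) :=
    squeeze_zero_norm' hbound (hm₀ ▸ (hm.tendsto x₀).comp continuousAt_fst)
  have hbase : Tendsto (fun p : X × ℝ => U x₀ p.2) (𝓝 (x₀, t₀)) (𝓝 (U x₀ t₀)) :=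
    ((hU x₀).continuous.tendsto t₀).comp continuousAt_snd
  simpa only [ContinuousAt, uncurry_def, sub_add_cancel, zero_add] using
    hsub.add hbase

theorem hasDerivAt_propagator_of_hasDerivAt_hamiltonian {A A' U : ℝ → ℝ → Matrix n n ℂ}
    (hA : ∀ x t, (A x t)ᴴ = A x t) (hAc : Continuous (uncurry A))
    (hA' : ∀ x t, HasDerivAt (fun y => A y t) (A' x t) x) (hA'c : Continuous (uncurry A'))
    (hU : ∀ x, IsPropagator (A x) (U x)) (x₀ t : ℝ) :
    HasDerivAt (fun x => U x t)
      (U x₀ t * (-I • ∫ σ in (0 : ℝ)..t, (U x₀ σ)ᴴ * A' x₀ σ * U x₀ σ)) x₀ := by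
  set K : ℝ → ℝ → Matrix n n ℂ := fun x σ => ∫ τ in (0 : ℝ)..1, A' (x₀ + τ * (x - x₀)) σ
  have hK : ∀ x σ, A x σ - A x₀ σ = (x - x₀) • K x σ := fun x σ =>
    sub_eq_smul_integral_unitInterval (fun y => hA' y σ)
      (hA'c.comp (continuous_id.prodMk continuous_const)) x₀ x
  have hKc : Continuous (uncurry K) := by
    apply intervalIntegral.continuous_parametric_intervalIntegral_of_continuous'
    exact hA'c.comp
      (by fun_prop : Continuous fun q : (ℝ × ℝ) × ℝ => (x₀ + q.2 * (q.1.1 - x₀), q.1.2))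
  have hK₀ : ∀ σ, K x₀ σ = A' x₀ σ := by simp [K]
  have hAx : ∀ x, Continuous (A x) := fun x => hAc.comp (continuous_const.prodMk continuous_id)
  have hUc := continuous_propagator_of_continuous_hamiltonian hA hAc hU
  simp only [← hK₀]
  refine hasDerivAt_of_sub_eq_smul (f := fun x => U x t)
    (g := fun x => U x₀ t * (-I • ∫ σ in (0 : ℝ)..t, (U x₀ σ)ᴴ * K x σ * U x σ)) (fun x => ?_) ?_
  · rw [(hU x).sub_eq_mul_integral (hU x₀) (hA x₀) (hAx x) (hAx x₀)]
    simp only [hK, smul_mul_assoc, mul_smul_comm, intervalIntegral.integral_smul]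
    rw [smul_comm]
  · have hF : Continuous fun p : ℝ × ℝ => (U x₀ p.2)ᴴ * K p.1 p.2 * U p.1 p.2 :=
      (((hU x₀).continuous.comp continuous_snd).matrix_conjTranspose.mul hKc).mul hUc
    have hint : Continuous fun x => ∫ σ in (0 : ℝ)..t, (U x₀ σ)ᴴ * K x σ * U x σ :=
      intervalIntegral.continuous_parametric_intervalIntegral_of_continuous' hF 0 t
    exact ((continuous_const_mul (U x₀ t)).comp (hint.const_smul (-I))).continuousAt

end Propagator

theorem matPderiv_eq_fderiv {N D : ℕ} {H : (Fin D → ℝ) → Matrix (Fin N) (Fin N) ℂ}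
    {θ : Fin D → ℝ} (hH : DifferentiableAt ℝ H θ) (j : Fin D) :
    matPderiv j H θ = fderiv ℝ H θ (Pi.single j 1) := by
  rw [← Function.update_eq_self j θ] at hH
  have h := (hH.hasFDerivAt.comp_hasDerivAt (θ j) (hasDerivAt_update θ j (θ j))).deriv
  rwa [Function.update_eq_self] at h

theorem hasDerivAt_propagator_update {N D : ℕ} {H : (Fin D → ℝ) → Matrix (Fin N) (Fin N) ℂ}
    {Ω : Fin D → ℝ} {U : ℝ → (Fin D → ℝ) → Matrix (Fin N) (Fin N) ℂ}
    (hH : ContDiff ℝ 1 H) (hHherm : ∀ θ, (H θ)ᴴ = H θ)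
    (hU : ∀ φ, IsPropagator (fun t => H (t • Ω + φ)) (fun t => U t φ))
    (θ₀ : Fin D → ℝ) (j : Fin D) (t : ℝ) :
    HasDerivAt (fun s => U t (Function.update θ₀ j s))
      (U t θ₀ * (-I • ∫ σ in (0 : ℝ)..t, (U σ θ₀)ᴴ * matPderiv j H (σ • Ω + θ₀) * U σ θ₀))
      (θ₀ j) := by
  have hHd : Differentiable ℝ H := hH.differentiable one_ne_zero
  have hphase : Continuous fun p : ℝ × ℝ => p.2 • Ω + Function.update θ₀ j p.1 := by fun_prop
  have hderiv := hasDerivAt_propagator_of_hasDerivAt_hamiltonian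
    (A := fun x σ => H (σ • Ω + Function.update θ₀ j x))
    (A' := fun x σ => fderiv ℝ H (σ • Ω + Function.update θ₀ j x) (Pi.single j 1))
    (U := fun x σ => U σ (Function.update θ₀ j x)) (fun x σ => hHherm _)
    (hH.continuous.comp hphase)
    (fun x σ => (hHd _).hasFDerivAt.comp_hasDerivAt x ((hasDerivAt_update θ₀ j x).const_add _))
    (((hH.continuous_fderiv one_ne_zero).comp hphase).clm_apply continuous_const)
    (fun x => hU _) (θ₀ j) t
  simpa [Function.update_eq_self, matPderiv_eq_fderiv (hHd _)] using hderiv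

/-- For a quasiperiodically driven system with `C¹` Hermitian Hamiltonian `H(θ)`, drive
phases `θ_t = Ω t + θ₀`, and propagator `U(t;θ₀)` solving `i ∂ₜ U = H(Ω t + θ₀) U`,
`U(0;θ₀) = 1`, the frequency-lattice displacement `Δn_j(t) = −i U† ∂_{θ₀ⱼ} U` equals the
time integral of the Heisenberg photon-current operator:
`−i U(t)† ∂_{θ₀ⱼ} U(t) = −∫₀ᵗ U(s)† (∂_j H)(Ω s + θ₀) U(s) ds`. -/
theorem freq_lattice_displacement_eq_integral_current {N D : ℕ}
    (H : (Fin D → ℝ) → Matrix (Fin N) (Fin N) ℂ)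
    (hH : ContDiff ℝ 1 H)
    (hHherm : ∀ θ, (H θ)ᴴ = H θ)
    (Ω θ₀ : Fin D → ℝ)
    (U : ℝ → (Fin D → ℝ) → Matrix (Fin N) (Fin N) ℂ)
    (hU0 : ∀ φ, U 0 φ = 1)
    (hUode : ∀ (t : ℝ) (φ : Fin D → ℝ),
      HasDerivAt (fun s => U s φ) ((-Complex.I) • (H (t • Ω + φ) * U t φ)) t) :
    ∀ (j : Fin D) (t : ℝ),
      (-Complex.I) • ((U t θ₀)ᴴ * matPderiv j (U t) θ₀)
        = -∫ s in (0:ℝ)..t, (U s θ₀)ᴴ * matPderiv j H (s • Ω + θ₀) * U s θ₀ := by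
  intro j t
  have hU : ∀ φ, IsPropagator (fun t => H (t • Ω + φ)) (fun t => U t φ) :=
    fun φ => ⟨hU0 φ, fun t => hUode t φ⟩
  rw [matPderiv, (hasDerivAt_propagator_update hH hHherm hU θ₀ j t).deriv, ← mul_assoc,
    (hU θ₀).conjTranspose_mul_self (fun _ => hHherm _) t, one_mul, smul_smul, neg_mul_neg,
    I_mul_I, neg_one_smul]
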